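/- Let m ≥ 2 and let ℋ be the incidence structure produced by the Hjelmslev construction from a projective plane 𝒫 of order m, affine planes 𝒜_p of order m, orthogonal arrays 𝒪_l = OA(2, m+1, m), and admissible choices of labeled parallel classes. Then any two distinct lines of ℋ meet in at least one point; moreover, two distinct lines with the same first coordinate (the same line of 𝒫) meet in exactly m common points, all lying in a single point-neighbourhood, while two lines with distinct first coordinates meet in exactly one common point. -/
import Mathlib



/-- A projective plane: any two distinct points lie on a unique common line, any two distinct
lines meet in a unique point, and there are four points no three of which are collinear. -/
structure IsProjectivePlane {P L : Type} (I : P → L → Prop) : Prop where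
  point_line : ∀ p q : P, p ≠ q → ∃! l : L, I p l ∧ I q l
  line_point : ∀ g h : L, g ≠ h → ∃! p : P, I p g ∧ I p h
  nondeg : ∃ a b c d : P, a ≠ b ∧ a ≠ c ∧ a ≠ d ∧ b ≠ c ∧ b ≠ d ∧ c ≠ d ∧
    (∀ l : L, ¬(I a l ∧ I b l ∧ I c l)) ∧ (∀ l : L, ¬(I a l ∧ I b l ∧ I d l)) ∧
    (∀ l : L, ¬(I a l ∧ I c l ∧ I d l)) ∧ (∀ l : L, ¬(I b l ∧ I c l ∧ I d l))

/-- A projective plane has order `m` if every line is incident with exactly `m + 1` points. -/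
def ProjOrder {P L : Type} (I : P → L → Prop) (m : ℕ) : Prop :=
  ∀ l : L, Nat.card {p : P // I p l} = m + 1

/-- An affine plane: any two distinct points lie on a unique common line, for every
non-incident point–line pair there is a unique line through the point disjoint from the
line, and there exist three non-collinear points. -/
structure IsAffinePlane {P L : Type} (I : P → L → Prop) : Prop where
  point_line : ∀ p q : P, p ≠ q → ∃! l : L, I p l ∧ I q l
  playfair : ∀ (p : P) (l : L), ¬ I p l → ∃! g : L, I p g ∧ ∀ q : P, ¬(I q l ∧ I q g)
  nondeg : ∃ a b c : P, a ≠ b ∧ a ≠ c ∧ b ≠ c ∧ ∀ l : L, ¬(I a l ∧ I b l ∧ I c l)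

/-- An affine plane has order `m` if every line is incident with exactly `m` points. -/
def AffOrder {P L : Type} (I : P → L → Prop) (m : ℕ) : Prop :=
  ∀ l : L, Nat.card {p : P // I p l} = m

/-- Two lines are parallel if they are equal or disjoint. -/
def Parallel {P L : Type} (I : P → L → Prop) (g h : L) : Prop :=
  g = h ∨ ∀ p : P, ¬(I p g ∧ I p h)

/-- A parallel class: an equivalence class of lines under parallelism. -/
def IsParallelClass {P L : Type} (I : P → L → Prop) (Cl : Set L) : Prop :=
  ∃ g : L, Cl = {h : L | Parallel I g h}

/-- The (strength-2) orthogonal array property: for any two distinct columns, the map sending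
a row to its pair of entries in those columns is a bijection onto `S × S`, i.e. each ordered
pair of symbols occurs in exactly one row. -/
def IsOrthArray2 {R Col S : Type} (F : R → Col → S) : Prop :=
  ∀ c₁ c₂ : Col, c₁ ≠ c₂ → Function.Bijective (fun r : R => (F r c₁, F r c₂))
/-- Data for the (projective) Hjelmslev construction: a projective plane `𝒫` of order `m`;
for each point `p` of `𝒫` an affine plane `𝒜_p` of order `m`; for each line `l` of `𝒫` an
orthogonal array `OA(2, m+1, m)` whose columns are indexed by the `m+1` points of `l`; and
for each incident pair `(p, l)` a parallel class of `𝒜_p` whose `m` lines are labeled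
bijectively by the `m` symbols of `𝒪_l`, such that distinct lines of `𝒫` through `p`
receive distinct parallel classes of `𝒜_p`. -/
structure PHData (m : ℕ) : Type 1 where
  /-- points of the projective plane `𝒫` -/
  Pt : Type
  /-- lines of the projective plane `𝒫` -/
  Ln : Type
  /-- incidence of `𝒫` -/
  I : Pt → Ln → Prop
  proj : IsProjectivePlane I
  ord : ProjOrder I m
  /-- points of the affine plane `𝒜_p` -/
  APt : Pt → Type
  /-- lines of the affine plane `𝒜_p` -/
  ALn : Pt → Type
  /-- incidence of `𝒜_p` -/
  AI : ∀ p : Pt, APt p → ALn p → Prop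
  aff : ∀ p : Pt, IsAffinePlane (AI p)
  aord : ∀ p : Pt, AffOrder (AI p) m
  /-- rows of the orthogonal array `𝒪_l` -/
  Row : Ln → Type
  /-- symbols of the orthogonal array `𝒪_l` -/
  Sym : Ln → Type
  row_card : ∀ l : Ln, Nat.card (Row l) = m ^ 2
  sym_card : ∀ l : Ln, Nat.card (Sym l) = m
  /-- the orthogonal array `𝒪_l`, with columns labeled by the points of `l` -/
  O : ∀ l : Ln, Row l → {p : Pt // I p l} → Sym l
  oa : ∀ l : Ln, IsOrthArray2 (O l)
  /-- the labeling of the chosen parallel class `C(p, l)`: symbol `s` labels line `C p l h s` -/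
  C : ∀ (p : Pt) (l : Ln), I p l → Sym l → ALn p
  C_inj : ∀ (p : Pt) (l : Ln) (h : I p l), Function.Injective (C p l h)
  C_class : ∀ (p : Pt) (l : Ln) (h : I p l), IsParallelClass (AI p) (Set.range (C p l h))
  C_distinct : ∀ (p : Pt) (l₁ l₂ : Ln) (h₁ : I p l₁) (h₂ : I p l₂), l₁ ≠ l₂ →
    Set.range (C p l₁ h₁) ≠ Set.range (C p l₂ h₂)

/-- Points of the constructed structure `ℋ`: pairs `(p, a)` with `p` a point of `𝒫` and `a`
a point of `𝒜_p`. -/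
def PHData.HPt {m : ℕ} (D : PHData m) : Type := Σ p : D.Pt, D.APt p

/-- Lines of the constructed structure `ℋ`: pairs `(l, r)` with `l` a line of `𝒫` and `r` a
row of `𝒪_l`. -/
def PHData.HLn {m : ℕ} (D : PHData m) : Type := Σ l : D.Ln, D.Row l

/-- Incidence of `ℋ`: `(p, a)` is incident with `(l, r)` iff `p` lies on `l` and `a` lies on
the line of `C(p, l)` labeled by the entry of `𝒪_l` in row `r` and column `p`. -/
def PHData.HI {m : ℕ} (D : PHData m) : D.HPt → D.HLn → Prop :=
  fun x g => ∃ h : D.I x.1 g.1, D.AI x.1 x.2 (D.C x.1 g.1 h (D.O g.1 g.2 ⟨x.1, h⟩))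

/-- Point-neighbour relation of `ℋ`: `(p, a) ∼ (p', a')` iff `p = p'`. -/
def PHData.nPt {m : ℕ} (D : PHData m) : D.HPt → D.HPt → Prop := fun x y => x.1 = y.1

/-- Line-neighbour relation of `ℋ`: `(l, r) ∼ (l', r')` iff `l = l'`. -/
def PHData.nLn {m : ℕ} (D : PHData m) : D.HLn → D.HLn → Prop := fun g h => g.1 = h.1

/-- `ℋ = (I, nP, nL)` is a projective Hjelmslev plane with (specified) epimorphism
`(φP, φL)` onto the projective plane `I'`. -/
structure IsPHPlaneWith {P L P' L' : Type} (I : P → L → Prop)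
    (nP : P → P → Prop) (nL : L → L → Prop)
    (I' : P' → L' → Prop) (φP : P → P') (φL : L → L') : Prop where
  nP_equiv : Equivalence nP
  nL_equiv : Equivalence nL
  join : ∀ p q : P, ∃ l : L, I p l ∧ I q l
  meet : ∀ g h : L, ∃ p : P, I p g ∧ I p h
  line_nbr : ∀ g h : L, (∃ p q : P, p ≠ q ∧ I p g ∧ I p h ∧ I q g ∧ I q h) → nL g h
  point_nbr : ∀ p q : P, (∃ g h : L, g ≠ h ∧ I p g ∧ I q g ∧ I p h ∧ I q h) → nP p q
  target_proj : IsProjectivePlane I'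
  φP_surj : Function.Surjective φP
  φL_surj : Function.Surjective φL
  incid_pres : ∀ (p : P) (l : L), I p l → I' (φP p) (φL l)
  nP_iff : ∀ p q : P, φP p = φP q ↔ nP p q
  nL_iff : ∀ g h : L, φL g = φL h ↔ nL g h

/-- `ℋ = (I, nP, nL)` is an affine Hjelmslev plane with (specified) epimorphism
`(φP, φL)` onto the affine plane `I'`. -/
structure IsAHPlaneWith {P L P' L' : Type} (I : P → L → Prop)
    (nP : P → P → Prop) (nL : L → L → Prop)
    (I' : P' → L' → Prop) (φP : P → P') (φL : L → L') : Prop where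
  nP_equiv : Equivalence nP
  nL_equiv : Equivalence nL
  join : ∀ p q : P, ∃ l : L, I p l ∧ I q l
  line_nbr : ∀ g h : L, (∃ p q : P, p ≠ q ∧ I p g ∧ I p h ∧ I q g ∧ I q h) → nL g h
  target_aff : IsAffinePlane I'
  φP_surj : Function.Surjective φP
  φL_surj : Function.Surjective φL
  incid_pres : ∀ (p : P) (l : L), I p l → I' (φP p) (φL l)
  nP_iff : ∀ p q : P, φP p = φP q ↔ nP p q
  nL_iff : ∀ g h : L, φL g = φL h ↔ nL g h
  par : ∀ g h : L, (∀ p : P, ¬(I p g ∧ I p h)) → Parallel I' (φL g) (φL h)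

/-- Each point of each line has exactly `t` neighbours on that line. -/
def NbrsOnLines {P L : Type} (I : P → L → Prop) (nP : P → P → Prop) (t : ℕ) : Prop :=
  ∀ (l : L) (p : P), I p l → Nat.card {q : P // I q l ∧ nP p q} = t

/-- `ℋ` is a projective Hjelmslev plane (with associated projective plane unspecified). -/
def IsPHPlane {P L : Type} (I : P → L → Prop) (nP : P → P → Prop) (nL : L → L → Prop) :
    Prop :=
  ∃ (P' L' : Type) (I' : P' → L' → Prop) (φP : P → P') (φL : L → L'),
    IsPHPlaneWith I nP nL I' φP φL

/-- `ℋ` is a `(t, r)` projective Hjelmslev plane: each point of each line has exactly `t`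
neighbours on that line, and the associated projective plane has order `r`. -/
def IsTRPHPlane {P L : Type} (I : P → L → Prop) (nP : P → P → Prop) (nL : L → L → Prop)
    (t r : ℕ) : Prop :=
  ∃ (P' L' : Type) (I' : P' → L' → Prop) (φP : P → P') (φL : L → L'),
    IsPHPlaneWith I nP nL I' φP φL ∧ ProjOrder I' r ∧ NbrsOnLines I nP t

/-- `ℋ` is a `(t, r)` affine Hjelmslev plane: each point of each line has exactly `t`
neighbours on that line, and the associated affine plane has order `r`. -/
def IsTRAHPlane {P L : Type} (I : P → L → Prop) (nP : P → P → Prop) (nL : L → L → Prop)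
    (t r : ℕ) : Prop :=
  ∃ (P' L' : Type) (I' : P' → L' → Prop) (φP : P → P') (φL : L → L'),
    IsAHPlaneWith I nP nL I' φP φL ∧ AffOrder I' r ∧ NbrsOnLines I nP t

/-- The lines of the point-neighbourhood restriction at `p`: the nonempty intersections of
lines of `ℋ` with the neighbourhood of `p`, viewed as sets of points. -/
def NbrLines {P L : Type} (I : P → L → Prop) (nP : P → P → Prop) (p : P) : Set (Set P) :=
  {s : Set P | s.Nonempty ∧ ∃ g : L, s = {q : P | nP q p ∧ I q g}}

/-- `ℋ` is 2-uniform: every point-neighbourhood restriction is an ordinary affine plane, and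
for each point, every line of the restriction is the restriction of the same number of lines
of `ℋ`. -/
def TwoUniform {P L : Type} (I : P → L → Prop) (nP : P → P → Prop) : Prop :=
  ∀ p : P,
    IsAffinePlane (fun (q : {q : P // nP q p}) (s : NbrLines I nP p) =>
      (q : P) ∈ (s : Set P)) ∧
    ∃ n : ℕ, ∀ s : NbrLines I nP p,
      Nat.card {g : L // {q : P | nP q p ∧ I q g} = (s : Set P)} = n
/-- Data for the affine Hjelmslev construction: an affine plane `𝒜` of order `m`; for each
point `p` of `𝒜` an affine plane `𝒜_p` of order `m`; for each line `l` of `𝒜` an orthogonal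
array `OA(2, m, m)` whose columns are indexed by the `m` points of `l`; and for each incident
pair `(p, l)` a parallel class of `𝒜_p` whose `m` lines are labeled bijectively by the `m`
symbols of `𝒪_l`, such that distinct lines of `𝒜` through `p` receive distinct parallel
classes of `𝒜_p`. -/
structure AHData (m : ℕ) : Type 1 where
  /-- points of the base affine plane `𝒜` -/
  Pt : Type
  /-- lines of the base affine plane `𝒜` -/
  Ln : Type
  /-- incidence of `𝒜` -/
  I : Pt → Ln → Prop
  base : IsAffinePlane I
  ord : AffOrder I m
  /-- points of the affine plane `𝒜_p` -/
  APt : Pt → Type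
  /-- lines of the affine plane `𝒜_p` -/
  ALn : Pt → Type
  /-- incidence of `𝒜_p` -/
  AI : ∀ p : Pt, APt p → ALn p → Prop
  aff : ∀ p : Pt, IsAffinePlane (AI p)
  aord : ∀ p : Pt, AffOrder (AI p) m
  /-- rows of the orthogonal array `𝒪_l` -/
  Row : Ln → Type
  /-- symbols of the orthogonal array `𝒪_l` -/
  Sym : Ln → Type
  row_card : ∀ l : Ln, Nat.card (Row l) = m ^ 2
  sym_card : ∀ l : Ln, Nat.card (Sym l) = m
  /-- the orthogonal array `𝒪_l`, with columns labeled by the points of `l` -/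
  O : ∀ l : Ln, Row l → {p : Pt // I p l} → Sym l
  oa : ∀ l : Ln, IsOrthArray2 (O l)
  /-- the labeling of the chosen parallel class `C(p, l)`: symbol `s` labels line `C p l h s` -/
  C : ∀ (p : Pt) (l : Ln), I p l → Sym l → ALn p
  C_inj : ∀ (p : Pt) (l : Ln) (h : I p l), Function.Injective (C p l h)
  C_class : ∀ (p : Pt) (l : Ln) (h : I p l), IsParallelClass (AI p) (Set.range (C p l h))
  C_distinct : ∀ (p : Pt) (l₁ l₂ : Ln) (h₁ : I p l₁) (h₂ : I p l₂), l₁ ≠ l₂ →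
    Set.range (C p l₁ h₁) ≠ Set.range (C p l₂ h₂)

/-- Points of the constructed structure `ℋ`: pairs `(p, a)` with `p` a point of `𝒜` and `a`
a point of `𝒜_p`. -/
def AHData.HPt {m : ℕ} (D : AHData m) : Type := Σ p : D.Pt, D.APt p

/-- Lines of the constructed structure `ℋ`: pairs `(l, r)` with `l` a line of `𝒜` and `r` a
row of `𝒪_l`. -/
def AHData.HLn {m : ℕ} (D : AHData m) : Type := Σ l : D.Ln, D.Row l

/-- Incidence of `ℋ`: `(p, a)` is incident with `(l, r)` iff `p` lies on `l` and `a` lies on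
the line of `C(p, l)` labeled by the entry of `𝒪_l` in row `r` and column `p`. -/
def AHData.HI {m : ℕ} (D : AHData m) : D.HPt → D.HLn → Prop :=
  fun x g => ∃ h : D.I x.1 g.1, D.AI x.1 x.2 (D.C x.1 g.1 h (D.O g.1 g.2 ⟨x.1, h⟩))

/-- Point-neighbour relation of `ℋ`: `(p, a) ∼ (p', a')` iff `p = p'`. -/
def AHData.nPt {m : ℕ} (D : AHData m) : D.HPt → D.HPt → Prop := fun x y => x.1 = y.1

/-- Line-neighbour relation of `ℋ`: `(l, r) ∼ (l', r')` iff `l = l'`. -/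
def AHData.nLn {m : ℕ} (D : AHData m) : D.HLn → D.HLn → Prop := fun g h => g.1 = h.1

lemma par_symm {P L : Type} {I : P → L → Prop} {g h : L} (hp : Parallel I g h) :
    Parallel I h g := by
  rcases hp with rfl | hp
  · exact Or.inl rfl
  · exact Or.inr fun p hq => hp p ⟨hq.2, hq.1⟩

lemma par_trans {P L : Type} {I : P → L → Prop} (hA : IsAffinePlane I) {g h k : L}
    (h1 : Parallel I g h) (h2 : Parallel I h k) : Parallel I g k := by
  rcases h1 with rfl | h1
  · exact h2
  rcases h2 with rfl | h2
  · exact Or.inr h1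
  by_cases hgk : g = k
  · exact Or.inl hgk
  refine Or.inr fun p hp => ?_
  have hph : ¬ I p h := fun hh => h1 p ⟨hp.1, hh⟩
  obtain ⟨u, _, hu⟩ := hA.playfair p h hph
  have e1 : g = u := hu g ⟨hp.1, fun q hq => h1 q ⟨hq.2, hq.1⟩⟩
  have e2 : k = u := hu k ⟨hp.2, fun q hq => h2 q ⟨hq.1, hq.2⟩⟩
  exact hgk (e1.trans e2.symm)

lemma par_eq_of_mem {P L : Type} {I : P → L → Prop} {g h : L} {p : P}
    (hp : Parallel I g h) (h1 : I p g) (h2 : I p h) : g = h := by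
  rcases hp with rfl | hp
  · rfl
  · exact absurd ⟨h1, h2⟩ (hp p)

lemma class_eq_of_mem {P L : Type} {I : P → L → Prop} (hA : IsAffinePlane I) {Cl : Set L}
    (hCl : IsParallelClass I Cl) {g h : L} (hg : g ∈ Cl) (hh : h ∈ Cl) {p : P}
    (h1 : I p g) (h2 : I p h) : g = h := by
  obtain ⟨b, rfl⟩ := hCl
  exact par_eq_of_mem (par_trans hA (par_symm hg) hh) h1 h2

/-- two lines from distinct parallel classes meet in exactly one point -/
lemma distinct_class_meet {P L : Type} {I : P → L → Prop} (hA : IsAffinePlane I)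
    {C1 C2 : Set L} (h1 : IsParallelClass I C1) (h2 : IsParallelClass I C2)
    (hne : C1 ≠ C2) {g h : L} (hg : g ∈ C1) (hh : h ∈ C2) :
    ∃! p : P, I p g ∧ I p h := by
  obtain ⟨b1, rfl⟩ := h1
  obtain ⟨b2, rfl⟩ := h2
  have hnp : ¬ Parallel I g h := by
    intro hp
    apply hne
    ext k
    constructor
    · intro hk
      exact par_trans hA hh (par_trans hA (par_symm hp) (par_trans hA (par_symm hg) hk))
    · intro hk
      exact par_trans hA hg (par_trans hA hp (par_trans hA (par_symm hh) hk))
  simp only [Parallel, not_or, not_forall, not_not] at hnp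
  obtain ⟨hgh, p, hp⟩ := hnp
  refine ⟨p, hp, fun q hq => ?_⟩
  by_contra hqp
  obtain ⟨u, _, hu⟩ := hA.point_line q p hqp
  exact hgh ((hu g ⟨hq.1, hp.1⟩).trans (hu h ⟨hq.2, hp.2⟩).symm)

lemma oa_unique_agree {R K S : Type} (m : ℕ) (hm : 2 ≤ m)
    (hR : Nat.card R = m ^ 2) (hK : Nat.card K = m + 1) (hS : Nat.card S = m)
    (F : R → K → S) (hF : IsOrthArray2 F) {r r' : R} (hrr : r ≠ r') :
    ∃! c : K, F r c = F r' c := by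
  have finR : Finite R := Nat.finite_of_card_ne_zero (by rw [hR]; positivity)
  have finK : Finite K := Nat.finite_of_card_ne_zero (by omega)
  have finS : Finite S := Nat.finite_of_card_ne_zero (by omega)
  cases nonempty_fintype R; cases nonempty_fintype K; cases nonempty_fintype S
  classical
  rw [Nat.card_eq_fintype_card] at hR hK hS
  -- uniqueness
  have uniq : ∀ c₁ c₂ : K, F r c₁ = F r' c₁ → F r c₂ = F r' c₂ → c₁ = c₂ := by
    intro c₁ c₂ e₁ e₂
    by_contra hne
    exact hrr ((hF c₁ c₂ hne).1 (by simp [e₁, e₂]))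
  -- existence
  set T : K → Finset R := fun c =>
    (Finset.univ.filter (fun x => F x c = F r c)).erase r with hT
  have hTcard : ∀ c : K, (T c).card = m - 1 := by
    intro c
    have : ∃ c' : K, c' ≠ c := by
      have : Nontrivial K := Fintype.one_lt_card_iff_nontrivial.mp (by omega)
      exact exists_ne c
    obtain ⟨c', hc'⟩ := this
    have hbij := hF c c' hc'.symm
    have hB : (Finset.univ.filter (fun x => F x c = F r c)).card = m := by
      rw [← hS]
      apply Finset.card_bij (fun x _ => F x c')
      · intro a ha; exact Finset.mem_univ _
      · intro a ha b hb hab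
        simp only [Finset.mem_filter] at ha hb
        exact hbij.1 (by simp [ha.2, hb.2, hab])
      · intro s _
        obtain ⟨x, hx⟩ := hbij.2 (F r c, s)
        refine ⟨x, ?_, ?_⟩
        · simp only [Finset.mem_filter, Finset.mem_univ, true_and]
          exact congrArg Prod.fst hx
        · exact congrArg Prod.snd hx
    rw [hT]
    rw [Finset.card_erase_of_mem (by simp), hB]
  have hdisj : ∀ c₁ ∈ (Finset.univ : Finset K), ∀ c₂ ∈ Finset.univ, c₁ ≠ c₂ →
      Disjoint (T c₁) (T c₂) := by
    intro c₁ _ c₂ _ hne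
    rw [Finset.disjoint_left]
    intro x h1 h2
    simp only [hT, Finset.mem_erase, Finset.mem_filter] at h1 h2
    exact h1.1 ((hF c₁ c₂ hne).1 (by simp [h1.2.2, h2.2.2]))
  have hsum : ((Finset.univ : Finset K).biUnion T).card = m ^ 2 - 1 := by
    rw [Finset.card_biUnion hdisj]
    simp only [hTcard]
    rw [Finset.sum_const, Finset.card_univ, hK, smul_eq_mul]
    obtain ⟨n, rfl⟩ : ∃ n, m = n + 1 := ⟨m - 1, by omega⟩
    have h2 : (n + 1) ^ 2 = (n+1+1) * n + 1 := by ring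
    simp only [Nat.add_sub_cancel]
    omega
  have hsub : (Finset.univ : Finset K).biUnion T ⊆ Finset.univ.erase r := by
    intro x hx
    simp only [Finset.mem_biUnion, hT, Finset.mem_erase, Finset.mem_filter] at hx ⊢
    obtain ⟨c, _, hc⟩ := hx
    exact ⟨hc.1, Finset.mem_univ _⟩
  have hmem : r' ∈ (Finset.univ : Finset K).biUnion T := by
    rw [Finset.eq_of_subset_of_card_le hsub (by rw [hsum, Finset.card_erase_of_mem (Finset.mem_univ r), Finset.card_univ, hR])]
    exact Finset.mem_erase.mpr ⟨Ne.symm hrr, Finset.mem_univ _⟩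
  simp only [Finset.mem_biUnion, hT, Finset.mem_erase, Finset.mem_filter] at hmem
  obtain ⟨c, _, _, _, hc⟩ := hmem
  exact ⟨c, hc.symm, fun c' hc' => uniq c' c hc' hc.symm⟩

/-- In the structure `ℋ` produced by the Hjelmslev construction, any two
distinct lines meet in at least one point; two distinct lines with the same first coordinate
meet in exactly `m` common points, all lying in a single point-neighbourhood; and two lines
with distinct first coordinates meet in exactly one common point. -/
theorem hjelmslev_construction_lines (m : ℕ) (hm : 2 ≤ m) (D : PHData m) :
    (∀ g h : D.HLn, g ≠ h → ∃ x : D.HPt, D.HI x g ∧ D.HI x h) ∧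
    (∀ g h : D.HLn, g ≠ h → g.1 = h.1 →
      Nat.card {x : D.HPt // D.HI x g ∧ D.HI x h} = m ∧
      ∃ p : D.Pt, ∀ x : D.HPt, D.HI x g ∧ D.HI x h → x.1 = p) ∧
    (∀ g h : D.HLn, g.1 ≠ h.1 → ∃! x : D.HPt, D.HI x g ∧ D.HI x h) := by
  have case1 : ∀ (l : D.Ln) (r r' : D.Row l), r ≠ r' →
      Nat.card {x : D.HPt // D.HI x ⟨l, r⟩ ∧ D.HI x ⟨l, r'⟩} = m ∧
      (∃ x : D.HPt, D.HI x ⟨l, r⟩ ∧ D.HI x ⟨l, r'⟩) ∧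
      ∃ p : D.Pt, ∀ x : D.HPt, D.HI x ⟨l, r⟩ ∧ D.HI x ⟨l, r'⟩ → x.1 = p := by
    intro l r r' hr
    obtain ⟨⟨p, hpl⟩, hagree, huniq⟩ :=
      oa_unique_agree m hm (D.row_card l) (D.ord l) (D.sym_card l) (D.O l) (D.oa l) hr
    set L : D.ALn p := D.C p l hpl (D.O l r ⟨p, hpl⟩) with hLdef
    have fwd : ∀ x : D.HPt, D.HI x ⟨l, r⟩ ∧ D.HI x ⟨l, r'⟩ → x.1 = p := by
      rintro ⟨q, a⟩ ⟨⟨hq1, ha1⟩, ⟨hq2, ha2⟩⟩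
      have hsym : D.O l r ⟨q, hq1⟩ = D.O l r' ⟨q, hq1⟩ := by
        apply D.C_inj q l hq1
        apply class_eq_of_mem (D.aff q) (D.C_class q l hq1)
          (Set.mem_range_self _) (Set.mem_range_self _) ha1 ha2
      exact congrArg Subtype.val (huniq ⟨q, hq1⟩ hsym)
    have hf : ∀ a : {a : D.APt p // D.AI p a L},
        D.HI ⟨p, a.1⟩ ⟨l, r⟩ ∧ D.HI ⟨p, a.1⟩ ⟨l, r'⟩ :=
      fun a => ⟨⟨hpl, a.2⟩, ⟨hpl, hagree ▸ a.2⟩⟩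
    have hbij : Function.Bijective
        (fun a : {a : D.APt p // D.AI p a L} =>
          (⟨⟨p, a.1⟩, hf a⟩ : {x : D.HPt // D.HI x ⟨l, r⟩ ∧ D.HI x ⟨l, r'⟩})) := by
      constructor
      · intro a b hab
        have h2 : (⟨p, a.1⟩ : Σ q : D.Pt, D.APt q) = ⟨p, b.1⟩ := congrArg Subtype.val hab
        exact Subtype.ext (eq_of_heq (Sigma.mk.inj_iff.mp h2).2)
      · rintro ⟨⟨q, a⟩, hx⟩
        have hq : q = p := fwd ⟨q, a⟩ hx
        subst hq
        obtain ⟨⟨hq1, ha1⟩, -⟩ := hx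
        exact ⟨⟨a, ha1⟩, rfl⟩
    have hcard : Nat.card {x : D.HPt // D.HI x ⟨l, r⟩ ∧ D.HI x ⟨l, r'⟩} = m :=
      (Nat.card_eq_of_bijective _ hbij).symm.trans (D.aord p L)
    have hne : Nonempty {a : D.APt p // D.AI p a L} :=
      (Nat.card_ne_zero.mp (by rw [D.aord p L]; omega)).1
    obtain ⟨a⟩ := hne
    exact ⟨hcard, ⟨⟨p, a.1⟩, hf a⟩, p, fwd⟩
  have case2 : ∀ g h : D.HLn, g.1 ≠ h.1 → ∃! x : D.HPt, D.HI x g ∧ D.HI x h := by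
    rintro ⟨l, r⟩ ⟨l', r'⟩ hf
    dsimp only at hf
    obtain ⟨p, ⟨hpl, hpl'⟩, hpu⟩ := D.proj.line_point l l' hf
    obtain ⟨a, ⟨ha1, ha2⟩, hau⟩ :=
      distinct_class_meet (D.aff p) (D.C_class p l hpl) (D.C_class p l' hpl')
        (D.C_distinct p l l' hpl hpl' hf)
        (Set.mem_range_self (D.O l r ⟨p, hpl⟩)) (Set.mem_range_self (D.O l' r' ⟨p, hpl'⟩))
    refine ⟨⟨p, a⟩, ⟨⟨hpl, ha1⟩, ⟨hpl', ha2⟩⟩, ?_⟩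
    rintro ⟨q, b⟩ ⟨⟨hq1, hb1⟩, ⟨hq2, hb2⟩⟩
    have hqp : q = p := hpu q ⟨hq1, hq2⟩
    subst hqp
    have hba : b = a := hau b ⟨hb1, hb2⟩
    subst hba
    rfl
  refine ⟨?_, ?_, case2⟩
  · intro g h hgh
    by_cases hf : g.1 = h.1
    · obtain ⟨l, r⟩ := g
      obtain ⟨l', r'⟩ := h
      dsimp only at hf
      subst hf
      have hr : r ≠ r' := fun e => hgh (by rw [e])
      exact (case1 l r r' hr).2.1
    · obtain ⟨x, hx, -⟩ := case2 g h hf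
      exact ⟨x, hx⟩
  · intro g h hgh hf
    obtain ⟨l, r⟩ := g
    obtain ⟨l', r'⟩ := h
    dsimp only at hf
    subst hf
    have hr : r ≠ r' := fun e => hgh (by rw [e])
    obtain ⟨c1, -, c3⟩ := case1 l r r' hr
    exact ⟨c1, c3⟩
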